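/- arXiv:0712.4094 — 7 statements merged into one kernel-verified Lean document; each statement's English description precedes it below -/
import Mathlib

section
/- For integers 0 ≤ n ≤ N, define A_n^N = Σ_{k=0}^{N-n} (-1)^k · C(n+k, n). Then 2·A_n^N − A_{n-1}^{N-1} = (−1)^{N−n} · C(N, n) for all 1 ≤ n ≤ N. -/
/-- `A n N = ∑_{k=0}^{N-n} (-1)^k * C(n+k, n)` as an integer. -/
def altBinomSum (n N : ℕ) : ℤ :=
  ∑ k ∈ Finset.range (N - n + 1), (-1 : ℤ) ^ k * ((n + k).choose n : ℤ)

/-! Induction on `m = N - n`: going from `m` to `m + 1` adds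
`(-1)^(m+1) (2 C(n+m+1, n) - C(n+m, n-1))` to the left side, and Pascal's rule
`C(n+m+1, n) = C(n+m, n-1) + C(n+m, n)` shows that this is exactly the change of
`(-1)^m C(n+m, n)`. -/

lemma altBinomSum_add_succ (n m : ℕ) :
    altBinomSum n (n + (m + 1)) =
      altBinomSum n (n + m) + (-1 : ℤ) ^ (m + 1) * ((n + (m + 1)).choose n : ℤ) := by
  simp only [altBinomSum, Nat.add_sub_cancel_left]
  exact Finset.sum_range_succ _ (m + 1)

lemma two_mul_altBinomSum_succ_sub (p m : ℕ) :
    2 * altBinomSum (p + 1) (p + 1 + m) - altBinomSum p (p + m) =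
      (-1 : ℤ) ^ m * ((p + 1 + m).choose (p + 1) : ℤ) := by
  induction m with
  | zero => simp [altBinomSum]
  | succ m ih =>
    have pascal : (p + 1 + (m + 1)).choose (p + 1) =
        (p + 1 + m).choose p + (p + 1 + m).choose (p + 1) :=
      Nat.choose_succ_succ (p + 1 + m) p
    rw [altBinomSum_add_succ, altBinomSum_add_succ, pascal,
      show p + (m + 1) = p + 1 + m by omega]
    push_cast
    linear_combination ih

theorem stmt0 (n N : ℕ) (hn : 1 ≤ n) (hnN : n ≤ N) :
    2 * altBinomSum n N - altBinomSum (n - 1) (N - 1) =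
      (-1 : ℤ) ^ (N - n) * (N.choose n : ℤ) := by
  obtain ⟨p, rfl⟩ : ∃ p, n = p + 1 := ⟨n - 1, by omega⟩
  obtain ⟨m, rfl⟩ : ∃ m, N = p + 1 + m := ⟨N - (p + 1), by omega⟩
  rw [show p + 1 + m - 1 = p + m by omega, Nat.add_sub_cancel, Nat.add_sub_cancel_left]
  exact two_mul_altBinomSum_succ_sub p m
end

section
/- Let b, ν, l be integers with ν ≥ 2, b ≥ ν, l ≥ 1, and let n_1, …, n_l be integers all ≥ ν, satisfying: (1) Σ_{i=1}^l n_i ≤ (l−1)·b + ν; (2) whenever i ≥ 2 and n_i < b, then n_{i-1} ≥ b(ν−1) + 2; (3) if ν = 2, then whenever i ≥ 3, n_i < b and n_{i-1} ≤ 2b − 2, one has n_{i-2} ≥ 2b − 1. Then n_1 = ν and n_i = b for all i = 2, …, l. -/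
/-!
Write `S m` for the partial sum `n 1 + ⋯ + n m`. For every `m ≤ l` one has
`m * b + ν ≤ S m + b` (at `m = 0` this is `ν ≤ b`). Where `n m < b`, conditions (2) and (3)
make the two or three terms ending at `m` so large that the inequality is strict at such `m`.
Condition (1) says that equality holds at `m = l`; then the last term is not below `b`, so
peeling it off gives `n m = b` and equality at `m - 1`, down to `n 1 = ν`.
-/

def partialSum (n : ℕ → ℕ) (m : ℕ) : ℕ := ∑ i ∈ Finset.Icc 1 m, n i

@[simp] theorem partialSum_zero (n : ℕ → ℕ) : partialSum n 0 = 0 := rfl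

theorem partialSum_succ (n : ℕ → ℕ) (m : ℕ) :
    partialSum n (m + 1) = partialSum n m + n (m + 1) :=
  Finset.sum_Icc_succ_top (by omega) n

structure IsAdmissible (b ν l : ℕ) (n : ℕ → ℕ) : Prop where
  le_term : ∀ i, 1 ≤ i → i ≤ l → ν ≤ n i
  prev_large : ∀ i, 2 ≤ i → i ≤ l → n i < b → b * (ν - 1) + 2 ≤ n (i - 1)
  prev_prev_large : ν = 2 → ∀ i, 3 ≤ i → i ≤ l → n i < b → n (i - 1) ≤ 2 * b - 2 →
    2 * b - 1 ≤ n (i - 2)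

namespace IsAdmissible

variable {b ν l : ℕ} {n : ℕ → ℕ}

theorem lt_partialSum_of_lt (h : IsAdmissible b ν l n) (hν : 2 ≤ ν) {m : ℕ}
    (hm : 2 ≤ m) (hml : m ≤ l) (hlt : n m < b)
    (hlow : ∀ j < m, j * b + ν ≤ partialSum n j + b) :
    m * b + ν < partialSum n m + b := by
  obtain ⟨k, rfl⟩ : ∃ k, m = k + 2 := ⟨m - 2, by omega⟩
  have hlast : ν ≤ n (k + 2) := h.le_term _ (by omega) hml
  have hprev : b * (ν - 1) + 2 ≤ n (k + 1) := h.prev_large (k + 2) hm hml hlt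
  have hsum : partialSum n (k + 2) = partialSum n k + n (k + 1) + n (k + 2) := by
    rw [partialSum_succ, partialSum_succ]
  rw [hsum, add_mul]
  by_cases hbig : 2 * b - 1 ≤ n (k + 1)
  · have hk := hlow k (by omega)
    omega
  have hν2 : ν = 2 := by
    by_contra hne
    have : b * 2 ≤ b * (ν - 1) := Nat.mul_le_mul_left b (by omega)
    omega
  subst hν2
  rcases Nat.eq_zero_or_pos k with rfl | hk
  · simp only [partialSum_zero]
    omega
  have hpp : 2 * b - 1 ≤ n k := by
    have hmid : n (k + 1) ≤ 2 * b - 2 := by omega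
    simpa using h.prev_prev_large rfl (k + 2) (by omega) hml hlt (by simpa using hmid)
  have hsplit : partialSum n k = partialSum n (k - 1) + n k := by
    obtain ⟨j, rfl⟩ : ∃ j, k = j + 1 := ⟨k - 1, by omega⟩
    exact partialSum_succ n j
  have hk1 := hlow (k - 1) (by omega)
  rw [Nat.sub_one_mul] at hk1
  have hkb : b ≤ k * b := Nat.le_mul_of_pos_left b hk
  omega

theorem le_partialSum (h : IsAdmissible b ν l n) (hν : 2 ≤ ν) (hb : ν ≤ b) :
    ∀ m ≤ l, m * b + ν ≤ partialSum n m + b := by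
  intro m
  induction m using Nat.strong_induction_on with
  | _ m ih =>
  intro hm
  rcases Nat.lt_or_ge m 2 with hm2 | hm2
  · interval_cases m
    · simpa using hb
    · have h1 := h.le_term 1 le_rfl hm
      simp only [partialSum, Finset.Icc_self, Finset.sum_singleton]
      omega
  by_cases hlt : n m < b
  · exact (h.lt_partialSum_of_lt hν hm2 hm hlt fun j hj => ih j hj (by omega)).le
  obtain ⟨k, rfl⟩ : ∃ k, m = k + 1 := ⟨m - 1, by omega⟩
  have hk := ih k (by omega) (by omega)
  rw [partialSum_succ, add_mul]
  omega

theorem eq_of_partialSum_eq (h : IsAdmissible b ν l n) (hν : 2 ≤ ν) (hb : ν ≤ b) :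
    ∀ m, 1 ≤ m → m ≤ l → partialSum n m + b = m * b + ν →
      n 1 = ν ∧ ∀ i, 2 ≤ i → i ≤ m → n i = b := by
  intro m hm
  induction m, hm using Nat.le_induction with
  | base =>
    intro _ hsum
    simp only [partialSum, Finset.Icc_self, Finset.sum_singleton] at hsum
    exact ⟨by omega, fun i _ _ => by omega⟩
  | succ k _ ih =>
    intro hkl hsum
    have hlow := h.le_partialSum hν hb
    have hnk : b ≤ n (k + 1) := by
      by_contra! hlt
      have hstrict := h.lt_partialSum_of_lt hν (by omega) hkl hlt fun i _ => hlow i (by omega)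
      omega
    have hk := hlow k (by omega)
    rw [partialSum_succ, add_mul] at hsum
    obtain ⟨h1, hrest⟩ := ih (by omega) (by omega)
    refine ⟨h1, fun i hi hik => ?_⟩
    rcases hik.lt_or_eq with hik | rfl
    · exact hrest i hi (by omega)
    · omega

end IsAdmissible

theorem stmt5 (b ν l : ℕ) (n : ℕ → ℕ)
    (hν : 2 ≤ ν) (hb : ν ≤ b) (hl : 1 ≤ l)
    (hge : ∀ i, 1 ≤ i → i ≤ l → ν ≤ n i)
    (h1 : ∑ i ∈ Finset.Icc 1 l, n i ≤ (l - 1) * b + ν)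
    (h2 : ∀ i, 2 ≤ i → i ≤ l → n i < b → b * (ν - 1) + 2 ≤ n (i - 1))
    (h3 : ν = 2 → ∀ i, 3 ≤ i → i ≤ l → n i < b → n (i - 1) ≤ 2 * b - 2 →
      2 * b - 1 ≤ n (i - 2)) :
    n 1 = ν ∧ ∀ i, 2 ≤ i → i ≤ l → n i = b := by
  have h : IsAdmissible b ν l n := ⟨hge, h2, h3⟩
  have hsum : partialSum n l + b ≤ l * b + ν := by
    obtain ⟨k, rfl⟩ : ∃ k, l = k + 1 := ⟨l - 1, by omega⟩
    have h1' : partialSum n (k + 1) ≤ k * b + ν := by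
      simpa only [partialSum, Nat.add_sub_cancel] using h1
    rw [add_mul]
    omega
  exact h.eq_of_partialSum_eq hν hb l hl le_rfl
    (le_antisymm hsum (h.le_partialSum hν hb l le_rfl))
end

section
/- Let A = k[t]/⟨t²⟩ and define k-linear maps α_j: A → A by α_0 = 0, α_1 = id, α_2(λ + μt) = μt, and α_j = 0 for j > 2. Then the formula s(Y ⊗ a) = α_1(a) ⊗ Y + α_2(a) ⊗ Y² extends to a twisting map s: k[Y] ⊗ A → A ⊗ k[Y]. -/
/-!
Write a dual number as `a = inl λ + inr μ`, i.e. `λ + μ t`. For any algebra endomorphism `φ` of `B`,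
`b ⊗ (λ + μ t) ↦ λ ⊗ b + μ t ⊗ φ b` is a twisting map: on the `inl` part it is the flip, on the
`inr` part it is multiplicative because `φ` is, and every product that would involve two factors
`t` vanishes since `t² = 0`. For `B = k[Y]` and `φ = aeval (Y + Y²)` this is the map of the
statement, `α₁(a) ⊗ Y + α₂(a) ⊗ Y²` being `a ⊗ Y + μ t ⊗ Y²`.
-/

open TensorProduct

/-- A twisting map `s : B ⊗ A → A ⊗ B`: it is compatible with the units and
with the multiplications of `A` and `B` (stated on pure tensors, which
suffices by linearity). -/
structure IsTwistingMap (k A B : Type*) [CommRing k] [Ring A] [Ring B]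
    [Algebra k A] [Algebra k B] (s : B ⊗[k] A →ₗ[k] A ⊗[k] B) : Prop where
  unit_left : ∀ a : A, s (1 ⊗ₜ a) = a ⊗ₜ 1
  unit_right : ∀ b : B, s (b ⊗ₜ 1) = 1 ⊗ₜ b
  mul_compat_B : ∀ (b b' : B) (a : A),
    s ((b * b') ⊗ₜ a) =
      (LinearMap.lTensor A (LinearMap.mul' k B))
        ((TensorProduct.assoc k A B B)
          ((LinearMap.rTensor B s)
            ((TensorProduct.assoc k B A B).symm
              ((LinearMap.lTensor B s)
                ((TensorProduct.assoc k B B A) ((b ⊗ₜ b') ⊗ₜ a))))))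
  mul_compat_A : ∀ (b : B) (a a' : A),
    s (b ⊗ₜ (a * a')) =
      (LinearMap.rTensor B (LinearMap.mul' k A))
        ((TensorProduct.assoc k A A B).symm
          ((LinearMap.lTensor A s)
            ((TensorProduct.assoc k A B A)
              ((LinearMap.rTensor A s)
                ((TensorProduct.assoc k B A A).symm (b ⊗ₜ (a ⊗ₜ a')))))))

open TrivSqZeroExt

namespace DualNumber

variable {k B : Type*} [CommRing k] [Ring B] [Algebra k B]

theorem tmul_eq_inl_fst_tmul_add_inr_snd_tmul (a : DualNumber k) (b : B) :
    a ⊗ₜ[k] b = inl a.fst ⊗ₜ b + inr a.snd ⊗ₜ b := by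
  rw [← add_tmul, inl_fst_add_inr_snd_eq]

noncomputable def twistByAlgHom (φ : B →ₐ[k] B) : B ⊗[k] DualNumber k →ₗ[k] DualNumber k ⊗[k] B :=
  (TensorProduct.map (Algebra.linearMap k (DualNumber k) ∘ₗ (fstHom k k k).toLinearMap) LinearMap.id
      + TensorProduct.map (inrHom k k ∘ₗ sndHom k k) φ.toLinearMap)
    ∘ₗ (TensorProduct.comm k B (DualNumber k)).toLinearMap

theorem twistByAlgHom_tmul (φ : B →ₐ[k] B) (b : B) (a : DualNumber k) :
    twistByAlgHom φ (b ⊗ₜ a) = inl a.fst ⊗ₜ b + inr a.snd ⊗ₜ φ b := by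
  simp [twistByAlgHom, algebraMap_eq_inl]

theorem isTwistingMap_twistByAlgHom (φ : B →ₐ[k] B) :
    IsTwistingMap k (DualNumber k) B (twistByAlgHom φ) where
  unit_left a := by
    rw [twistByAlgHom_tmul, map_one, ← tmul_eq_inl_fst_tmul_add_inr_snd_tmul]
  unit_right b := by
    simp only [twistByAlgHom_tmul, fst_one, snd_one, inl_one, inr_zero, zero_tmul, add_zero]
  mul_compat_B b b' a := by
    simp only [assoc_tmul, LinearMap.lTensor_tmul, twistByAlgHom_tmul, tmul_add, map_add,
      assoc_symm_tmul, LinearMap.rTensor_tmul, LinearMap.mul'_apply, map_mul, fst_inl, snd_inl,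
      fst_inr, snd_inr, inl_zero, inr_zero, zero_tmul, add_zero, zero_add]
  mul_compat_A b a a' := by
    simp only [assoc_symm_tmul, LinearMap.rTensor_tmul, twistByAlgHom_tmul, add_tmul, map_add,
      assoc_tmul, LinearMap.lTensor_tmul, tmul_add, LinearMap.mul'_apply, zero_tmul, add_zero,
      inl_mul_inl, inl_mul_inr, inr_mul_inl, inr_mul_inr, fst_mul, DualNumber.snd_mul,
      smul_eq_mul, op_smul_eq_mul, inr_add, add_assoc]

end DualNumber

open Polynomial DualNumber in
theorem stmt10 (k : Type*) [CommRing k] :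
    ∃ s : Polynomial k ⊗[k] DualNumber k →ₗ[k] DualNumber k ⊗[k] Polynomial k,
      IsTwistingMap k (DualNumber k) (Polynomial k) s ∧
      ∀ a : DualNumber k, s ((X : Polynomial k) ⊗ₜ a) =
        a ⊗ₜ (X : Polynomial k) +
          (TrivSqZeroExt.inr a.snd : DualNumber k) ⊗ₜ ((X : Polynomial k) ^ 2) := by
  refine ⟨twistByAlgHom (aeval (X + X ^ 2)), isTwistingMap_twistByAlgHom _, fun a => ?_⟩
  rw [twistByAlgHom_tmul, aeval_X, tmul_add, tmul_eq_inl_fst_tmul_add_inr_snd_tmul a X]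
  abel
end

section
/- Let k be a commutative ring, A a k-algebra, α: A → A an algebra automorphism and β: A → A an (α, α²)-derivation, i.e., β(ab) = β(a)·α²(b) + α(a)·β(b). Define α_0 = 0, α_1 = α, and α_j = (β∘α^{-1})^{j-2}∘β for j ≥ 2. If β∘α^{-1} is locally nilpotent (for each a ∈ A there is n with (β∘α^{-1})^n(a) = 0), then s(Y ⊗ a) = Σ_{j≥0} α_j(a) ⊗ Y^j defines a twisting map s: k[Y] ⊗ A → A ⊗ k[Y]. -/
/-!
Put `δ = β ∘ α⁻¹`. It is locally nilpotent, satisfies `δ (x y) = δ x * α y + x * δ y`, and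
`α_{j+1} = δʲ ∘ α`. On `A ⊗ k[X]` let `T` be the right `k[X]`-linear operator with
`T (a ⊗ 1) = ∑ⱼ δʲ (α a) ⊗ Xʲ⁺¹`, the prospective left multiplication by `X`, and put
`s (p ⊗ a) = p(T) (a ⊗ 1)`. Compatibility with the multiplication of `k[X]` is then automatic.
Compatibility with that of `A` says that `T` commutes with right multiplication by every `a'` in
the twisted product; this follows from the twisted Leibniz rule in the form
`T ((x ⊗ 1) w) = ∑ⱼ (δʲ (α x) ⊗ 1) Tʲ⁺¹ w`, proved by induction on the nilpotency index of `α x`.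
-/

open TensorProduct

open Polynomial

theorem Polynomial.aeval_apply_of_comp_eq {R M N : Type*} [CommSemiring R] [AddCommMonoid M]
    [Module R M] [AddCommMonoid N] [Module R N] {f : Module.End R M} {g : Module.End R N}
    {φ : M →ₗ[R] N} (h : g ∘ₗ φ = φ ∘ₗ f) (p : R[X]) (m : M) :
    aeval g p (φ m) = φ (aeval f p m) := by
  induction p using Polynomial.induction_on' with
  | add p q hp hq => simp only [map_add, LinearMap.add_apply, hp, hq]
  | monomial n c =>
    simp only [aeval_monomial, Module.End.mul_apply, Module.algebraMap_end_apply]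
    rw [← LinearMap.comp_apply (g ^ n),
      Module.End.commute_pow_left_of_commute h n, LinearMap.comp_apply, map_smul]

section TensorMul

variable {k A B : Type*} [CommRing k] [Ring A] [Ring B] [Algebra k A] [Algebra k B]

theorem lTensor_mul'_assoc_tmul (u : A ⊗[k] B) (b : B) :
    LinearMap.lTensor A (LinearMap.mul' k B) (TensorProduct.assoc k A B B (u ⊗ₜ b)) =
      u * (1 ⊗ₜ b) := by
  induction u using TensorProduct.induction_on with
  | zero => simp only [zero_tmul, map_zero, zero_mul]
  | add u v hu hv => simp only [add_tmul, map_add, hu, hv, add_mul]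
  | tmul x y => simp

theorem rTensor_mul'_assoc_symm_tmul (a : A) (u : A ⊗[k] B) :
    LinearMap.rTensor B (LinearMap.mul' k A) ((TensorProduct.assoc k A A B).symm (a ⊗ₜ u)) =
      (a ⊗ₜ 1) * u := by
  induction u using TensorProduct.induction_on with
  | zero => simp only [tmul_zero, map_zero, mul_zero]
  | add u v hu hv => simp only [tmul_add, map_add, hu, hv, mul_add]
  | tmul x y => simp

end TensorMul

section GeomSeries

variable {k M : Type*} [CommRing k] [AddCommGroup M] [Module k M]
  (f : Module.End k M) (hf : ∀ m, ∃ n, (f ^ n) m = 0)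

theorem sum_range_pow_tmul_eq {m : M} {n n' : ℕ} (hn : (f ^ n) m = 0) (hn' : (f ^ n') m = 0) :
    ∑ j ∈ Finset.range n, (f ^ j) m ⊗ₜ[k] (X ^ j : k[X]) =
      ∑ j ∈ Finset.range n', (f ^ j) m ⊗ₜ[k] (X ^ j : k[X]) := by
  have h {l : ℕ} (hl : (f ^ l) m = 0) (l' : ℕ) :
      ∑ j ∈ Finset.range (l + l'), (f ^ j) m ⊗ₜ[k] (X ^ j : k[X]) =
        ∑ j ∈ Finset.range l, (f ^ j) m ⊗ₜ[k] (X ^ j : k[X]) :=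
    (Finset.sum_subset (Finset.range_subset_range.mpr (Nat.le_add_right l l')) fun j _ hj => by
      rw [Module.End.pow_map_zero_of_le (by simpa using hj) hl, zero_tmul]).symm
  rw [← h hn n', ← h hn' n, add_comm]

noncomputable def geomSeries : M →ₗ[k] M ⊗[k] k[X] where
  toFun m := ∑ j ∈ Finset.range (hf m).choose, (f ^ j) m ⊗ₜ (X ^ j : k[X])
  map_add' a b := by
    have ha := Module.End.pow_map_zero_of_le (Nat.le_add_right _ (hf b).choose) (hf a).choose_spec
    have hb := Module.End.pow_map_zero_of_le (Nat.le_add_left _ (hf a).choose) (hf b).choose_spec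
    have hab : (f ^ ((hf a).choose + (hf b).choose)) (a + b) = 0 := by
      rw [map_add, ha, hb, add_zero]
    rw [sum_range_pow_tmul_eq f (hf (a + b)).choose_spec hab,
      sum_range_pow_tmul_eq f (hf a).choose_spec ha, sum_range_pow_tmul_eq f (hf b).choose_spec hb,
      ← Finset.sum_add_distrib]
    simp only [map_add, add_tmul]
  map_smul' c a := by
    have hca : (f ^ (hf a).choose) (c • a) = 0 := by rw [map_smul, (hf a).choose_spec, smul_zero]
    rw [sum_range_pow_tmul_eq f (hf (c • a)).choose_spec hca, RingHom.id_apply, Finset.smul_sum]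
    simp only [map_smul, smul_tmul']

theorem geomSeries_apply {m : M} {n : ℕ} (hn : (f ^ n) m = 0) :
    geomSeries f hf m = ∑ j ∈ Finset.range n, (f ^ j) m ⊗ₜ[k] (X ^ j : k[X]) :=
  sum_range_pow_tmul_eq f (hf m).choose_spec hn

end GeomSeries

theorem geomSeries_eq_tmul_add_mul {k B : Type*} [CommRing k] [Ring B] [Algebra k B]
    (f : Module.End k B) (hf : ∀ b, ∃ n, (f ^ n) b = 0) (b : B) :
    geomSeries f hf b = b ⊗ₜ 1 + geomSeries f hf (f b) * (1 ⊗ₜ X) := by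
  obtain ⟨n, hn⟩ := hf b
  have hn' : (f ^ n) (f b) = 0 := by
    rw [← Module.End.mul_apply, ← pow_succ, Module.End.pow_map_zero_of_le n.le_succ hn]
  rw [geomSeries_apply f hf (Module.End.pow_map_zero_of_le n.le_succ hn),
    geomSeries_apply f hf hn', Finset.sum_range_succ', Finset.sum_mul, add_comm]
  simp only [pow_zero, Module.End.one_apply, Algebra.TensorProduct.tmul_mul_tmul, mul_one,
    pow_succ, Module.End.mul_apply]

theorem map_one_eq_zero_of_leibniz {A F : Type*} [Ring A] [FunLike F A A] [OneHomClass F A A]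
    {α : F} {δ : A → A} (hδ : ∀ x y, δ (x * y) = δ x * α y + x * δ y) : δ 1 = 0 := by
  simpa using hδ 1 1

section TwistingMap

variable {k A : Type*} [CommRing k] [Ring A] [Algebra k A]
  (α : A ≃ₐ[k] A) (δ : Module.End k A) (hnil : ∀ a, ∃ n, (δ ^ n) a = 0)

/-- Left multiplication by `X` in the twisted tensor product `A ⊗ k[X]` that `twistingMap`
defines. -/
noncomputable def twistedMulX : Module.End k (A ⊗[k] k[X]) :=
  TensorProduct.lift <| LinearMap.mk₂ k (fun a p => geomSeries δ hnil (α a) * (1 ⊗ₜ (X * p)))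
    (fun a a' p => by rw [map_add, map_add, add_mul])
    (fun c a p => by rw [map_smul, map_smul, smul_mul_assoc])
    (fun a p p' => by rw [mul_add, tmul_add, mul_add])
    (fun c a p => by rw [mul_smul_comm, tmul_smul, mul_smul_comm])

theorem twistedMulX_tmul (a : A) (p : k[X]) :
    twistedMulX α δ hnil (a ⊗ₜ p) = geomSeries δ hnil (α a) * (1 ⊗ₜ (X * p)) := rfl

theorem twistedMulX_mul_one_tmul (u : A ⊗[k] k[X]) (p : k[X]) :
    twistedMulX α δ hnil (u * (1 ⊗ₜ p)) = twistedMulX α δ hnil u * (1 ⊗ₜ p) := by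
  induction u using TensorProduct.induction_on with
  | zero => rw [zero_mul, map_zero, zero_mul]
  | add u v hu hv => rw [add_mul, map_add, map_add, add_mul, hu, hv]
  | tmul a q =>
    rw [Algebra.TensorProduct.tmul_mul_tmul, mul_one, twistedMulX_tmul, twistedMulX_tmul,
      mul_assoc, Algebra.TensorProduct.tmul_mul_tmul, one_mul, mul_assoc]

theorem twistedMulX_one_tmul (hδ : ∀ x y, δ (x * y) = δ x * α y + x * δ y) (p : k[X]) :
    twistedMulX α δ hnil (1 ⊗ₜ p) = 1 ⊗ₜ (X * p) := by
  have h1 : (δ ^ 1) 1 = 0 := by rw [pow_one, map_one_eq_zero_of_leibniz hδ]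
  rw [twistedMulX_tmul, map_one, geomSeries_apply δ hnil h1, Finset.sum_range_one, pow_zero,
    pow_zero, Module.End.one_apply, ← Algebra.TensorProduct.one_def, one_mul]

-- The twisted Leibniz rule for all powers of `δ` at once, in generating-function form.
theorem geomSeries_mul (hδ : ∀ x y, δ (x * y) = δ x * α y + x * δ y) (y d : A) :
    geomSeries δ hnil (y * d) =
      (y ⊗ₜ 1) * geomSeries δ hnil d +
        twistedMulX α δ hnil ((α.symm (δ y) ⊗ₜ 1) * geomSeries δ hnil d) := by
  obtain ⟨n, hn⟩ := hnil d
  induction n generalizing d with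
  | zero =>
    rw [pow_zero, Module.End.one_apply] at hn
    simp [hn]
  | succ n ih =>
    rw [pow_succ, Module.End.mul_apply] at hn
    rw [geomSeries_eq_tmul_add_mul δ hnil (y * d), hδ, map_add, add_mul, ih (δ d) hn,
      geomSeries_eq_tmul_add_mul δ hnil d, mul_add, mul_add, map_add, ← mul_assoc, ← mul_assoc,
      twistedMulX_mul_one_tmul, Algebra.TensorProduct.tmul_mul_tmul,
      Algebra.TensorProduct.tmul_mul_tmul, twistedMulX_tmul, mul_one, mul_one, map_mul α,
      AlgEquiv.apply_symm_apply, add_mul]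
    abel

theorem twistedMulX_symm_tmul_mul (hδ : ∀ x y, δ (x * y) = δ x * α y + x * δ y) (y : A)
    (w : A ⊗[k] k[X]) :
    twistedMulX α δ hnil ((α.symm y ⊗ₜ 1) * w) =
      (y ⊗ₜ 1) * twistedMulX α δ hnil w +
        twistedMulX α δ hnil ((α.symm (δ y) ⊗ₜ 1) * twistedMulX α δ hnil w) := by
  induction w using TensorProduct.induction_on with
  | zero => simp only [mul_zero, map_zero, add_zero]
  | add u v hu hv =>
    rw [mul_add, map_add, hu, hv, map_add, mul_add, mul_add, map_add]
    abel
  | tmul c q =>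
    rw [Algebra.TensorProduct.tmul_mul_tmul, one_mul, twistedMulX_tmul, twistedMulX_tmul,
      map_mul α, AlgEquiv.apply_symm_apply, geomSeries_mul α δ hnil hδ, add_mul, mul_assoc,
      ← twistedMulX_mul_one_tmul, mul_assoc]

theorem twistedMulX_symm_tmul_mul_eq_sum (hδ : ∀ x y, δ (x * y) = δ x * α y + x * δ y) {y : A}
    {n : ℕ} (hn : (δ ^ n) y = 0) (w : A ⊗[k] k[X]) :
    twistedMulX α δ hnil ((α.symm y ⊗ₜ 1) * w) =
      ∑ j ∈ Finset.range n, ((δ ^ j) y ⊗ₜ 1) * (twistedMulX α δ hnil ^ (j + 1)) w := by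
  induction n generalizing y w with
  | zero =>
    rw [pow_zero, Module.End.one_apply] at hn
    simp [hn]
  | succ n ih =>
    rw [pow_succ, Module.End.mul_apply] at hn
    rw [twistedMulX_symm_tmul_mul α δ hnil hδ, ih hn, Finset.sum_range_succ', add_comm]
    simp only [pow_succ, pow_zero, one_mul, Module.End.mul_apply, Module.End.one_apply]

noncomputable def twistingMap : k[X] ⊗[k] A →ₗ[k] A ⊗[k] k[X] :=
  TensorProduct.lift <| LinearMap.lcomp k _ ((TensorProduct.mk k A k[X]).flip 1) ∘ₗ
    (aeval (twistedMulX α δ hnil)).toLinearMap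

theorem twistingMap_tmul (p : k[X]) (a : A) :
    twistingMap α δ hnil (p ⊗ₜ a) = aeval (twistedMulX α δ hnil) p (a ⊗ₜ 1) := rfl

/-- Right multiplication by `a'` in the twisted tensor product. -/
noncomputable def twistedMulRight (a' : A) : Module.End k (A ⊗[k] k[X]) :=
  LinearMap.rTensor k[X] (LinearMap.mul' k A) ∘ₗ
    (TensorProduct.assoc k A A k[X]).symm.toLinearMap ∘ₗ
    LinearMap.lTensor A (twistingMap α δ hnil) ∘ₗ
    (TensorProduct.assoc k A k[X] A).toLinearMap ∘ₗ (TensorProduct.mk k (A ⊗[k] k[X]) A).flip a'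

theorem twistedMulRight_tmul (a' x : A) (r : k[X]) :
    twistedMulRight α δ hnil a' (x ⊗ₜ r) = (x ⊗ₜ 1) * twistingMap α δ hnil (r ⊗ₜ a') := by
  simp [twistedMulRight, rTensor_mul'_assoc_symm_tmul]

theorem twistedMulX_comp_twistedMulRight (hδ : ∀ x y, δ (x * y) = δ x * α y + x * δ y)
    (a' : A) :
    twistedMulX α δ hnil ∘ₗ twistedMulRight α δ hnil a' =
      twistedMulRight α δ hnil a' ∘ₗ twistedMulX α δ hnil := by
  refine TensorProduct.ext' fun x r => ?_
  obtain ⟨n, hn⟩ := hnil (α x)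
  have hsum := twistedMulX_symm_tmul_mul_eq_sum α δ hnil hδ hn (twistingMap α δ hnil (r ⊗ₜ a'))
  rw [α.symm_apply_apply] at hsum
  rw [LinearMap.comp_apply, LinearMap.comp_apply, twistedMulRight_tmul, twistedMulX_tmul,
    geomSeries_apply δ hnil hn, Finset.sum_mul, map_sum, hsum]
  refine Finset.sum_congr rfl fun j _ => ?_
  rw [Algebra.TensorProduct.tmul_mul_tmul, mul_one, twistedMulRight_tmul, twistingMap_tmul,
    twistingMap_tmul, map_mul, map_mul, map_pow, aeval_X, pow_succ, Module.End.mul_apply,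
    Module.End.mul_apply, Module.End.mul_apply]

theorem lTensor_mul'_assoc_rTensor_twistingMap (b : k[X]) (z : A ⊗[k] k[X]) :
    LinearMap.lTensor A (LinearMap.mul' k k[X]) (TensorProduct.assoc k A k[X] k[X]
      (LinearMap.rTensor k[X] (twistingMap α δ hnil) ((TensorProduct.assoc k k[X] A k[X]).symm
        (b ⊗ₜ z)))) = aeval (twistedMulX α δ hnil) b z := by
  induction z using TensorProduct.induction_on with
  | zero => simp only [tmul_zero, map_zero]
  | add u v hu hv => simp only [tmul_add, map_add, hu, hv]
  | tmul x r =>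
    have hcomm : twistedMulX α δ hnil ∘ₗ LinearMap.mulRight k (1 ⊗ₜ r) =
        LinearMap.mulRight k (1 ⊗ₜ r) ∘ₗ twistedMulX α δ hnil :=
      LinearMap.ext fun u => twistedMulX_mul_one_tmul α δ hnil u r
    rw [TensorProduct.assoc_symm_tmul, LinearMap.rTensor_tmul, lTensor_mul'_assoc_tmul,
      twistingMap_tmul, ← LinearMap.mulRight_apply (R := k), ← aeval_apply_of_comp_eq hcomm,
      LinearMap.mulRight_apply, Algebra.TensorProduct.tmul_mul_tmul, one_mul, mul_one]

theorem isTwistingMap_twistingMap (hδ : ∀ x y, δ (x * y) = δ x * α y + x * δ y) :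
    IsTwistingMap k A k[X] (twistingMap α δ hnil) where
  unit_left a := by rw [twistingMap_tmul, map_one, Module.End.one_apply]
  unit_right b := by
    have hcomm : twistedMulX α δ hnil ∘ₗ TensorProduct.mk k A k[X] 1 =
        TensorProduct.mk k A k[X] 1 ∘ₗ Algebra.lmul k k[X] X :=
      LinearMap.ext fun p => twistedMulX_one_tmul α δ hnil hδ p
    rw [twistingMap_tmul, ← TensorProduct.mk_apply, aeval_apply_of_comp_eq hcomm,
      aeval_algHom_apply, aeval_X_left_apply, Algebra.coe_lmul_eq_mul, LinearMap.mul_apply',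
      mul_one, TensorProduct.mk_apply]
  mul_compat_B b b' a := by
    rw [TensorProduct.assoc_tmul, LinearMap.lTensor_tmul, lTensor_mul'_assoc_rTensor_twistingMap,
      twistingMap_tmul, twistingMap_tmul, map_mul, Module.End.mul_apply]
  mul_compat_A b a a' := by
    rw [TensorProduct.assoc_symm_tmul, LinearMap.rTensor_tmul]
    change _ = twistedMulRight α δ hnil a' (twistingMap α δ hnil (b ⊗ₜ a))
    rw [twistingMap_tmul, twistingMap_tmul,
      ← aeval_apply_of_comp_eq (twistedMulX_comp_twistedMulRight α δ hnil hδ a'),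
      twistedMulRight_tmul, twistingMap_tmul, map_one, Module.End.one_apply,
      Algebra.TensorProduct.tmul_mul_tmul, mul_one]

theorem twistingMap_X_tmul {a : A} {n : ℕ} (hn : (δ ^ n) (α a) = 0) :
    twistingMap α δ hnil (X ⊗ₜ a) =
      ∑ j ∈ Finset.range n, (δ ^ j) (α a) ⊗ₜ (X ^ (j + 1) : k[X]) := by
  rw [twistingMap_tmul, aeval_X, twistedMulX_tmul, mul_one, geomSeries_apply δ hnil hn,
    Finset.sum_mul]
  simp only [Algebra.TensorProduct.tmul_mul_tmul, mul_one, pow_succ]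

end TwistingMap

open Polynomial in
theorem stmt11 (k A : Type*) [CommRing k] [Ring A] [Algebra k A]
    (α : A ≃ₐ[k] A) (β : A →ₗ[k] A)
    (hβ : ∀ a b : A, β (a * b) = β a * α (α b) + α a * β b)
    (hnilp : ∀ a : A, ∃ n : ℕ,
      (((β ∘ₗ α.symm.toLinearMap : Module.End k A) ^ n) : A →ₗ[k] A) a = 0)
    (αfam : ℕ → A →ₗ[k] A)
    (hfam0 : αfam 0 = 0) (hfam1 : αfam 1 = α.toLinearMap)
    (hfam : ∀ j, 2 ≤ j → αfam j =
      ((((β ∘ₗ α.symm.toLinearMap : Module.End k A) ^ (j - 2)) : A →ₗ[k] A) ∘ₗ β)) :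
    ∃ s : Polynomial k ⊗[k] A →ₗ[k] A ⊗[k] Polynomial k,
      IsTwistingMap k A (Polynomial k) s ∧
      ∀ a : A, ∃ n : ℕ, (∀ j, n ≤ j → αfam j a = 0) ∧
        s ((X : Polynomial k) ⊗ₜ a) =
          ∑ j ∈ Finset.range n, αfam j a ⊗ₜ ((X : Polynomial k) ^ j) := by
  set δ : Module.End k A := β ∘ₗ α.symm.toLinearMap
  have hδ (x y : A) : δ (x * y) = δ x * α y + x * δ y := by
    simpa [δ] using hβ (α.symm x) (α.symm y)
  have hfam_succ (j : ℕ) (a : A) : αfam (j + 1) a = (δ ^ j) (α a) := by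
    rcases j with _ | j
    · simp [hfam1]
    · rw [hfam (j + 2) (by omega), pow_succ, Module.End.mul_apply]
      simp [δ]
  refine ⟨twistingMap α δ hnilp, isTwistingMap_twistingMap α δ hnilp hδ, fun a => ?_⟩
  obtain ⟨n, hn⟩ := hnilp (α a)
  refine ⟨n + 1, fun j hj => ?_, ?_⟩
  · obtain ⟨i, rfl⟩ : ∃ i, j = i + 1 := ⟨j - 1, by omega⟩
    rw [hfam_succ, Module.End.pow_map_zero_of_le (by omega) hn]
  · rw [twistingMap_X_tmul α δ hnilp hn, Finset.sum_range_succ', hfam0, LinearMap.zero_apply,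
      zero_tmul, add_zero]
    simp only [hfam_succ]
end

section
/- Let Σ_{i,j} q_{ij} X^i ⊗ Y^j ∈ k[X] ⊗ k[Y] with q_{ij} = 0 whenever i ≤ 1 or j ≤ 1. Then there is a unique twisting map s: k[Y] ⊗ k[X] → k[X] ⊗ k[Y] with s(Y ⊗ X) = Σ_{ij} q_{ij} X^i ⊗ Y^j, and moreover s(Y^r ⊗ X^s) = 0 whenever r, s > 0 and r + s > 2. -/
/-!
Write `T` for the prescribed value of `s (Y ⊗ X)`; all its monomials `X^i ⊗ Y^j` have `i, j ≥ 2`.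

Existence: put `s (Y^r ⊗ X^m) = X^m ⊗ 1` if `r = 0`, `1 ⊗ Y^r` if `m = 0`, `T` if `r = m = 1` and
`0` otherwise, and check the multiplicativity conditions on monomials. The only nontrivial case,
`s (Y^(p+1) ⊗ X) = ∑ s (Y^p ⊗ X^i) * (1 ⊗ Y^j)` over the monomials of `T`, holds because every
`s (Y^p ⊗ X^i)` with `p ≥ 1`, `i ≥ 2` is `0` (and symmetrically in `X`).

Uniqueness: multiplicativity gives the recursions `s (Y^(r+1) ⊗ a) = ∑ s (Y ⊗ x) * (1 ⊗ y)` over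
`s (Y^r ⊗ a) = ∑ x ⊗ y`, and `s (b ⊗ X^(m+1)) = ∑ (x ⊗ 1) * s (y ⊗ X)` over `s (b ⊗ X^m) = ∑ x ⊗ y`.
They first show that for `r, m > 0` all monomials of `s (Y^r ⊗ X^m)` have both exponents `≥ 2`;
then each step raises the total degree, so by induction on `N` every `s (Y^r ⊗ X^m)` with
`r, m > 0`, `r + m > 2` lies in the span of the monomials of total degree `≥ N`, hence is `0`.
-/

open TensorProduct

open LinearMap

section TwistingMap

variable {k A B : Type*} [CommRing k] [Ring A] [Ring B] [Algebra k A] [Algebra k B]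

noncomputable def twistLeft (s : B ⊗[k] A →ₗ[k] A ⊗[k] B) (b : B) :
    A ⊗[k] B →ₗ[k] A ⊗[k] B :=
  lTensor A (mul' k B) ∘ₗ (TensorProduct.assoc k A B B).toLinearMap ∘ₗ rTensor B s ∘ₗ
    (TensorProduct.assoc k B A B).symm.toLinearMap ∘ₗ TensorProduct.mk k B (A ⊗[k] B) b

noncomputable def twistRight (s : B ⊗[k] A →ₗ[k] A ⊗[k] B) (a : A) :
    A ⊗[k] B →ₗ[k] A ⊗[k] B :=
  rTensor B (mul' k A) ∘ₗ (TensorProduct.assoc k A A B).symm.toLinearMap ∘ₗ lTensor A s ∘ₗ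
    (TensorProduct.assoc k A B A).toLinearMap ∘ₗ (TensorProduct.mk k (A ⊗[k] B) A).flip a

variable {s : B ⊗[k] A →ₗ[k] A ⊗[k] B}

theorem twistLeft_tmul (b : B) (x : A) (y : B) :
    twistLeft s b (x ⊗ₜ y) = s (b ⊗ₜ x) * (1 ⊗ₜ y) := by
  simp only [twistLeft, coe_comp, Function.comp_apply, TensorProduct.mk_apply,
    LinearEquiv.coe_coe, TensorProduct.assoc_symm_tmul, rTensor_tmul]
  induction s (b ⊗ₜ x) with
  | zero => simp
  | tmul u v => simp
  | add t t' ht ht' => simp only [add_tmul, map_add, ht, ht', add_mul]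

theorem twistRight_tmul (a x : A) (y : B) :
    twistRight s a (x ⊗ₜ y) = (x ⊗ₜ 1) * s (y ⊗ₜ a) := by
  simp only [twistRight, coe_comp, Function.comp_apply, flip_apply, TensorProduct.mk_apply,
    LinearEquiv.coe_coe, TensorProduct.assoc_tmul, lTensor_tmul]
  induction s (y ⊗ₜ a) with
  | zero => simp
  | tmul u v => simp
  | add t t' ht ht' => simp only [tmul_add, map_add, ht, ht', mul_add]

theorem twistLeft_one (h : ∀ a : A, s (1 ⊗ₜ a) = a ⊗ₜ 1) : twistLeft s (1 : B) = LinearMap.id :=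
  TensorProduct.ext' fun x y => by simp [twistLeft_tmul, h]

theorem twistRight_one (h : ∀ b : B, s (b ⊗ₜ 1) = 1 ⊗ₜ b) : twistRight s (1 : A) = LinearMap.id :=
  TensorProduct.ext' fun x y => by simp [twistRight_tmul, h]

theorem IsTwistingMap.map_mul_tmul (hs : IsTwistingMap k A B s) (b b' : B) (a : A) :
    s ((b * b') ⊗ₜ a) = twistLeft s b (s (b' ⊗ₜ a)) := by
  rw [hs.mul_compat_B]
  simp [twistLeft]

theorem IsTwistingMap.map_tmul_mul (hs : IsTwistingMap k A B s) (b : B) (a a' : A) :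
    s (b ⊗ₜ (a * a')) = twistRight s a' (s (b ⊗ₜ a)) := by
  rw [hs.mul_compat_A]
  simp [twistRight]

theorem IsTwistingMap.of_basis {ι κ : Type*} (bA : Module.Basis ι k A) (bB : Module.Basis κ k B)
    (unit_left : ∀ i, s (1 ⊗ₜ bA i) = bA i ⊗ₜ 1)
    (unit_right : ∀ j, s (bB j ⊗ₜ 1) = 1 ⊗ₜ bB j)
    (mul_left : ∀ j j' i, s ((bB j * bB j') ⊗ₜ bA i) = twistLeft s (bB j) (s (bB j' ⊗ₜ bA i)))
    (mul_right : ∀ j i i', s (bB j ⊗ₜ (bA i * bA i')) = twistRight s (bA i') (s (bB j ⊗ₜ bA i))) :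
    IsTwistingMap k A B s where
  unit_left a := LinearMap.congr_fun (bA.ext (f₁ := s ∘ₗ TensorProduct.mk k B A 1)
    (f₂ := (TensorProduct.mk k A B).flip 1) unit_left) a
  unit_right b := LinearMap.congr_fun (bB.ext (f₁ := s ∘ₗ (TensorProduct.mk k B A).flip 1)
    (f₂ := TensorProduct.mk k A B 1) unit_right) b
  mul_compat_B b b' a := by
    have key : s ∘ₗ rTensor A (mul' k B) = lTensor A (mul' k B) ∘ₗ
        (TensorProduct.assoc k A B B).toLinearMap ∘ₗ rTensor B s ∘ₗ
        (TensorProduct.assoc k B A B).symm.toLinearMap ∘ₗ lTensor B s ∘ₗ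
        (TensorProduct.assoc k B B A).toLinearMap :=
      ((bB.tensorProduct bB).tensorProduct bA).ext fun ⟨⟨j, j'⟩, i⟩ => by
        simpa [twistLeft, Module.Basis.tensorProduct_apply'] using mul_left j j' i
    simpa using LinearMap.congr_fun key ((b ⊗ₜ b') ⊗ₜ a)
  mul_compat_A b a a' := by
    have key : s ∘ₗ lTensor B (mul' k A) = rTensor B (mul' k A) ∘ₗ
        (TensorProduct.assoc k A A B).symm.toLinearMap ∘ₗ lTensor A s ∘ₗ
        (TensorProduct.assoc k A B A).toLinearMap ∘ₗ rTensor A s ∘ₗ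
        (TensorProduct.assoc k B A A).symm.toLinearMap :=
      (bB.tensorProduct (bA.tensorProduct bA)).ext fun ⟨j, ⟨i, i'⟩⟩ => by
        simpa [twistRight, Module.Basis.tensorProduct_apply'] using mul_right j i i'
    simpa using LinearMap.congr_fun key (b ⊗ₜ (a ⊗ₜ a'))

end TwistingMap

open Polynomial

section MonomialSpan

variable {k : Type*} [CommRing k]

theorem Polynomial.basisMonomials_apply (i : ℕ) : basisMonomials k i = X ^ i := by
  rw [coe_basisMonomials, X_pow_eq_monomial]

noncomputable def monomialBasis₂ : Module.Basis (ℕ × ℕ) k (k[X] ⊗[k] k[X]) :=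
  (basisMonomials k).tensorProduct (basisMonomials k)

theorem monomialBasis₂_apply (p : ℕ × ℕ) :
    (monomialBasis₂ p : k[X] ⊗[k] k[X]) = (X ^ p.1) ⊗ₜ (X ^ p.2) := by
  simp [monomialBasis₂, Module.Basis.tensorProduct_apply', basisMonomials_apply]

theorem ext_X_pow_tmul_X_pow {M : Type*} [AddCommMonoid M] [Module k M]
    {f g : k[X] ⊗[k] k[X] →ₗ[k] M}
    (h : ∀ i j : ℕ, f ((X ^ i) ⊗ₜ (X ^ j)) = g ((X ^ i) ⊗ₜ (X ^ j))) : f = g :=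
  monomialBasis₂.ext fun p => by simpa [monomialBasis₂_apply] using h p.1 p.2

variable (k) in
noncomputable def monomialSpan (S : Set (ℕ × ℕ)) : Submodule k (k[X] ⊗[k] k[X]) :=
  Submodule.span k (monomialBasis₂ '' S)

theorem X_pow_tmul_X_pow_mem_monomialSpan {S : Set (ℕ × ℕ)} {i j : ℕ} (h : (i, j) ∈ S) :
    ((X ^ i) ⊗ₜ (X ^ j) : k[X] ⊗[k] k[X]) ∈ monomialSpan k S :=
  Submodule.subset_span ⟨(i, j), h, monomialBasis₂_apply _⟩

theorem monomialSpan_mono {S S' : Set (ℕ × ℕ)} (h : S ⊆ S') :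
    monomialSpan k S ≤ monomialSpan k S' :=
  Submodule.span_mono (Set.image_mono h)

theorem monomialSpan_univ : monomialSpan k Set.univ = ⊤ := by
  rw [monomialSpan, Set.image_univ, Module.Basis.span_eq]

theorem map_mem_monomialSpan {f : k[X] ⊗[k] k[X] →ₗ[k] k[X] ⊗[k] k[X]} {S S' : Set (ℕ × ℕ)}
    (h : ∀ p ∈ S, f ((X ^ p.1) ⊗ₜ (X ^ p.2)) ∈ monomialSpan k S')
    {t : k[X] ⊗[k] k[X]} (ht : t ∈ monomialSpan k S) : f t ∈ monomialSpan k S' := by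
  refine (Submodule.span_le (p := (monomialSpan k S').comap f)).2 ?_ ht
  rintro _ ⟨p, hp, rfl⟩
  simpa [monomialBasis₂_apply] using h p hp

theorem map_eq_zero_of_mem_monomialSpan {f : k[X] ⊗[k] k[X] →ₗ[k] k[X] ⊗[k] k[X]}
    {S : Set (ℕ × ℕ)} (h : ∀ p ∈ S, f ((X ^ p.1) ⊗ₜ (X ^ p.2)) = 0)
    {t : k[X] ⊗[k] k[X]} (ht : t ∈ monomialSpan k S) : f t = 0 := by
  simpa [monomialSpan] using map_mem_monomialSpan (S' := ∅) (fun p hp => by simp [h p hp]) ht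

theorem X_pow_tmul_one_mul_mem_monomialSpan {S S' : Set (ℕ × ℕ)} {c : ℕ}
    (h : ∀ p ∈ S, (c + p.1, p.2) ∈ S') {t : k[X] ⊗[k] k[X]} (ht : t ∈ monomialSpan k S) :
    ((X ^ c) ⊗ₜ 1) * t ∈ monomialSpan k S' :=
  map_mem_monomialSpan (f := LinearMap.mulLeft k ((X ^ c) ⊗ₜ 1)) (fun p hp => by
    simpa [← pow_add] using X_pow_tmul_X_pow_mem_monomialSpan (h p hp)) ht

theorem mul_one_tmul_X_pow_mem_monomialSpan {S S' : Set (ℕ × ℕ)} {c : ℕ}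
    (h : ∀ p ∈ S, (p.1, p.2 + c) ∈ S') {t : k[X] ⊗[k] k[X]} (ht : t ∈ monomialSpan k S) :
    t * (1 ⊗ₜ (X ^ c)) ∈ monomialSpan k S' :=
  map_mem_monomialSpan (f := LinearMap.mulRight k (1 ⊗ₜ (X ^ c))) (fun p hp => by
    simpa [← pow_add] using X_pow_tmul_X_pow_mem_monomialSpan (h p hp)) ht

theorem eq_zero_of_forall_mem_monomialSpan {t : k[X] ⊗[k] k[X]}
    (h : ∀ N, t ∈ monomialSpan k {p | N ≤ p.1 + p.2}) : t = 0 := by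
  refine monomialBasis₂.repr.map_eq_zero_iff.1 (Finsupp.ext fun p => ?_)
  by_contra hp
  have := (monomialBasis₂.mem_span_image.1 (h (p.1 + p.2 + 1))) (Finsupp.mem_support_iff.2 hp)
  simp at this

end MonomialSpan

section MonomialTwist

variable {k : Type*} [CommRing k] (T : k[X] ⊗[k] k[X])

/-- The first tensor factor of the domain plays the role of `k[Y]`. -/
noncomputable def monomialTwist : k[X] ⊗[k] k[X] →ₗ[k] k[X] ⊗[k] k[X] :=
  monomialBasis₂.constr k fun p =>
    if p.1 = 0 then (X ^ p.2) ⊗ₜ 1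
    else if p.2 = 0 then 1 ⊗ₜ (X ^ p.1)
    else if p.1 = 1 ∧ p.2 = 1 then T
    else 0

theorem monomialTwist_X_pow_tmul_X_pow (r m : ℕ) :
    monomialTwist T ((X ^ r) ⊗ₜ (X ^ m)) =
      if r = 0 then (X ^ m) ⊗ₜ 1
      else if m = 0 then 1 ⊗ₜ (X ^ r)
      else if r = 1 ∧ m = 1 then T
      else 0 := by
  rw [← monomialBasis₂_apply (r, m), monomialTwist, Module.Basis.constr_basis]

theorem monomialTwist_one_tmul (a : k[X]) : monomialTwist T (1 ⊗ₜ a) = a ⊗ₜ 1 :=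
  LinearMap.congr_fun ((basisMonomials k).ext (f₁ := monomialTwist T ∘ₗ TensorProduct.mk k _ _ 1)
    (f₂ := (TensorProduct.mk k _ _).flip 1) fun m => by
      simpa [basisMonomials_apply] using monomialTwist_X_pow_tmul_X_pow T 0 m) a

theorem monomialTwist_tmul_one (b : k[X]) : monomialTwist T (b ⊗ₜ 1) = 1 ⊗ₜ b :=
  LinearMap.congr_fun ((basisMonomials k).ext
    (f₁ := monomialTwist T ∘ₗ (TensorProduct.mk k _ _).flip 1)
    (f₂ := TensorProduct.mk k _ _ 1) fun r => by
      rcases eq_or_ne r 0 with rfl | hr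
      · simpa [basisMonomials_apply] using monomialTwist_X_pow_tmul_X_pow T 0 0
      · simpa [basisMonomials_apply, hr] using monomialTwist_X_pow_tmul_X_pow T r 0) b

theorem monomialTwist_X_tmul_X : monomialTwist T (X ⊗ₜ X) = T := by
  simpa using monomialTwist_X_pow_tmul_X_pow T 1 1

theorem monomialTwist_X_pow_tmul_X_pow_of_pos {r m : ℕ} (hr : 0 < r) (hm : 0 < m) :
    monomialTwist T ((X ^ r) ⊗ₜ (X ^ m)) = if r = 1 ∧ m = 1 then T else 0 := by
  simp [monomialTwist_X_pow_tmul_X_pow, hr.ne', hm.ne']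

theorem monomialTwist_X_pow_tmul_X_pow_eq_zero {r m : ℕ} (hr : 0 < r) (hm : 0 < m)
    (hrm : 2 < r + m) : monomialTwist T ((X ^ r) ⊗ₜ (X ^ m)) = 0 := by
  rw [monomialTwist_X_pow_tmul_X_pow_of_pos T hr hm, if_neg (by omega)]

theorem isTwistingMap_monomialTwist (hT : T ∈ monomialSpan k {p | 2 ≤ p.1 ∧ 2 ≤ p.2}) :
    IsTwistingMap k k[X] k[X] (monomialTwist T) := by
  refine .of_basis (basisMonomials k) (basisMonomials k) (fun _ => monomialTwist_one_tmul T _)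
    (fun _ => monomialTwist_tmul_one T _) (fun p c u => ?_) (fun p u v => ?_)
  all_goals simp only [basisMonomials_apply, ← pow_add]
  · rcases Nat.eq_zero_or_pos p with rfl | hp
    · rw [pow_zero, twistLeft_one (monomialTwist_one_tmul T), zero_add, LinearMap.id_apply]
    rcases Nat.eq_zero_or_pos u with rfl | hu
    · simp [monomialTwist_tmul_one, twistLeft_tmul, pow_add]
    rcases Nat.eq_zero_or_pos c with rfl | hc
    · simp [monomialTwist_one_tmul, twistLeft_tmul, ← Algebra.TensorProduct.one_def]
    rw [monomialTwist_X_pow_tmul_X_pow_eq_zero T (by omega) hu (by omega),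
      monomialTwist_X_pow_tmul_X_pow_of_pos T hc hu]
    split_ifs
    · refine (map_eq_zero_of_mem_monomialSpan (fun q hq => ?_) hT).symm
      obtain ⟨hq₁, hq₂⟩ := hq
      rw [twistLeft_tmul, monomialTwist_X_pow_tmul_X_pow_eq_zero T hp (by omega) (by omega),
        zero_mul]
    · rw [map_zero]
  · rcases Nat.eq_zero_or_pos v with rfl | hv
    · rw [pow_zero, twistRight_one (monomialTwist_tmul_one T), add_zero, LinearMap.id_apply]
    rcases Nat.eq_zero_or_pos p with rfl | hp
    · simp [monomialTwist_one_tmul, twistRight_tmul, pow_add]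
    rcases Nat.eq_zero_or_pos u with rfl | hu
    · simp [monomialTwist_tmul_one, twistRight_tmul, ← Algebra.TensorProduct.one_def]
    rw [monomialTwist_X_pow_tmul_X_pow_eq_zero T hp (by omega) (by omega),
      monomialTwist_X_pow_tmul_X_pow_of_pos T hp hu]
    split_ifs
    · refine (map_eq_zero_of_mem_monomialSpan (fun q hq => ?_) hT).symm
      obtain ⟨hq₁, hq₂⟩ := hq
      rw [twistRight_tmul, monomialTwist_X_pow_tmul_X_pow_eq_zero T (by omega) hv (by omega),
        mul_zero]
    · rw [map_zero]

end MonomialTwist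

namespace IsTwistingMap

variable {k : Type*} [CommRing k] {s : k[X] ⊗[k] k[X] →ₗ[k] k[X] ⊗[k] k[X]}
  (hs : IsTwistingMap k k[X] k[X] s) (hT : s (X ⊗ₜ X) ∈ monomialSpan k {p | 2 ≤ p.1 ∧ 2 ≤ p.2})
include hs hT

theorem map_X_pow_tmul_X_mem_monomialSpan {r : ℕ} (hr : 0 < r) :
    s ((X ^ r) ⊗ₜ X) ∈ monomialSpan k {p | 2 ≤ p.2} := by
  induction r with
  | zero => omega
  | succ r ih =>
    rcases Nat.eq_zero_or_pos r with rfl | hr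
    · simpa using monomialSpan_mono (S' := {p | 2 ≤ p.2}) (fun p hp => hp.2) hT
    rw [pow_succ' X r, hs.map_mul_tmul]
    refine map_mem_monomialSpan (fun q hq => ?_) (ih hr)
    rw [twistLeft_tmul]
    refine mul_one_tmul_X_pow_mem_monomialSpan (S := Set.univ) (fun p _ => ?_) ?_
    · simp only [Set.mem_ofPred_eq] at hq ⊢
      omega
    · simp [monomialSpan_univ]

theorem map_X_tmul_X_pow_mem_monomialSpan {m : ℕ} (hm : 0 < m) :
    s (X ⊗ₜ (X ^ m)) ∈ monomialSpan k {p | 2 ≤ p.1 ∧ 2 ≤ p.2} := by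
  induction m with
  | zero => omega
  | succ m ih =>
    rcases Nat.eq_zero_or_pos m with rfl | hm
    · simpa using hT
    rw [pow_succ X m, hs.map_tmul_mul]
    refine map_mem_monomialSpan (fun q hq => ?_) (ih hm)
    obtain ⟨hq₁, hq₂⟩ := hq
    rw [twistRight_tmul]
    refine X_pow_tmul_one_mul_mem_monomialSpan (fun p hp => ?_)
      (hs.map_X_pow_tmul_X_mem_monomialSpan hT (by omega))
    exact ⟨by omega, hp⟩

theorem map_X_pow_tmul_X_pow_mem_monomialSpan {r m : ℕ} (hr : 0 < r) (hm : 0 < m) :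
    s ((X ^ r) ⊗ₜ (X ^ m)) ∈ monomialSpan k {p | 2 ≤ p.1 ∧ 2 ≤ p.2} := by
  induction r with
  | zero => omega
  | succ r ih =>
    rcases Nat.eq_zero_or_pos r with rfl | hr
    · simpa using hs.map_X_tmul_X_pow_mem_monomialSpan hT hm
    rw [pow_succ' X r, hs.map_mul_tmul]
    refine map_mem_monomialSpan (fun q hq => ?_) (ih hr)
    obtain ⟨hq₁, hq₂⟩ := hq
    rw [twistLeft_tmul]
    refine mul_one_tmul_X_pow_mem_monomialSpan (fun p hp => ?_)
      (hs.map_X_tmul_X_pow_mem_monomialSpan hT (by omega))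
    exact ⟨hp.1, by omega⟩

theorem map_X_pow_tmul_X_pow_mem_monomialSpan_add_ge (N : ℕ) {r m : ℕ} (hr : 0 < r)
    (hm : 0 < m) (hrm : 2 < r + m) :
    s ((X ^ r) ⊗ₜ (X ^ m)) ∈ monomialSpan k {p | N ≤ p.1 + p.2} := by
  induction N generalizing r m with
  | zero => simp [monomialSpan_univ]
  | succ N ih =>
    obtain ⟨m, rfl⟩ : ∃ m', m = m' + 1 := ⟨m - 1, by omega⟩
    rcases Nat.eq_zero_or_pos m with rfl | hm
    · obtain ⟨r, rfl⟩ : ∃ r', r = r' + 1 := ⟨r - 1, by omega⟩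
      rw [pow_succ' X r, hs.map_mul_tmul]
      refine map_mem_monomialSpan (fun q hq => ?_)
        (hs.map_X_pow_tmul_X_pow_mem_monomialSpan hT (by omega) hm)
      obtain ⟨hq₁, hq₂⟩ := hq
      rw [twistLeft_tmul]
      refine mul_one_tmul_X_pow_mem_monomialSpan (S := {p | N ≤ p.1 + p.2}) (fun p hp => ?_) ?_
      · simp only [Set.mem_ofPred_eq] at hp ⊢
        omega
      · simpa using ih one_pos (by omega) (by omega)
    · rw [pow_succ X m, hs.map_tmul_mul]
      refine map_mem_monomialSpan (fun q hq => ?_)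
        (hs.map_X_pow_tmul_X_pow_mem_monomialSpan hT hr hm)
      obtain ⟨hq₁, hq₂⟩ := hq
      rw [twistRight_tmul]
      refine X_pow_tmul_one_mul_mem_monomialSpan (S := {p | N ≤ p.1 + p.2}) (fun p hp => ?_) ?_
      · simp only [Set.mem_ofPred_eq] at hp ⊢
        omega
      · simpa using ih (by omega) one_pos (by omega)

theorem map_X_pow_tmul_X_pow_eq_zero {r m : ℕ} (hr : 0 < r) (hm : 0 < m) (hrm : 2 < r + m) :
    s ((X ^ r) ⊗ₜ (X ^ m)) = 0 :=
  eq_zero_of_forall_mem_monomialSpan fun N =>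
    hs.map_X_pow_tmul_X_pow_mem_monomialSpan_add_ge hT N hr hm hrm

theorem eq_monomialTwist : s = monomialTwist (s (X ⊗ₜ X)) := by
  refine ext_X_pow_tmul_X_pow fun r m => ?_
  rw [monomialTwist_X_pow_tmul_X_pow]
  split_ifs with hr hm hrm
  · simpa [hr] using hs.unit_left (X ^ m)
  · simpa [hm] using hs.unit_right (X ^ r)
  · simp [hrm.1, hrm.2]
  · exact hs.map_X_pow_tmul_X_pow_eq_zero hT (by omega) (by omega) (by omega)

end IsTwistingMap

open Polynomial in
theorem stmt13_general (k : Type*) [CommRing k] (n : ℕ) (q : ℕ → ℕ → k)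
    (hq : ∀ i j, i ≤ 1 ∨ j ≤ 1 → q i j = 0) :
    ∃ s : Polynomial k ⊗[k] Polynomial k →ₗ[k] Polynomial k ⊗[k] Polynomial k,
      (IsTwistingMap k (Polynomial k) (Polynomial k) s ∧
        s ((X : Polynomial k) ⊗ₜ (X : Polynomial k)) =
          ∑ i ∈ Finset.range n, ∑ j ∈ Finset.range n,
            q i j • (((X : Polynomial k) ^ i) ⊗ₜ ((X : Polynomial k) ^ j))) ∧
      (∀ s' : Polynomial k ⊗[k] Polynomial k →ₗ[k] Polynomial k ⊗[k] Polynomial k,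
        IsTwistingMap k (Polynomial k) (Polynomial k) s' →
        s' ((X : Polynomial k) ⊗ₜ (X : Polynomial k)) =
          ∑ i ∈ Finset.range n, ∑ j ∈ Finset.range n,
            q i j • (((X : Polynomial k) ^ i) ⊗ₜ ((X : Polynomial k) ^ j)) →
        s' = s) ∧
      (∀ r m : ℕ, 0 < r → 0 < m → 2 < r + m →
        s (((X : Polynomial k) ^ r) ⊗ₜ ((X : Polynomial k) ^ m)) = 0) := by
  set T : k[X] ⊗[k] k[X] := ∑ i ∈ Finset.range n, ∑ j ∈ Finset.range n, q i j • ((X ^ i) ⊗ₜ (X ^ j))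
  have hT : T ∈ monomialSpan k {p | 2 ≤ p.1 ∧ 2 ≤ p.2} := by
    refine Submodule.sum_mem _ fun i _ => Submodule.sum_mem _ fun j _ => ?_
    by_cases hij : 2 ≤ i ∧ 2 ≤ j
    · exact Submodule.smul_mem _ _ (X_pow_tmul_X_pow_mem_monomialSpan hij)
    · rw [hq i j (by omega), zero_smul]
      exact Submodule.zero_mem _
  refine ⟨monomialTwist T, ⟨isTwistingMap_monomialTwist T hT, monomialTwist_X_tmul_X T⟩,
    fun s hs hsT => ?_, fun r m => monomialTwist_X_pow_tmul_X_pow_eq_zero T⟩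
  rw [hs.eq_monomialTwist (hsT ▸ hT), hsT]

open Polynomial in
theorem stmt13 (k : Type*) [CommRing k] (n : ℕ) (q : ℕ → ℕ → k)
    (hq : ∀ i j, i ≤ 1 ∨ j ≤ 1 → q i j = 0)
    (hqsupp : ∀ i j, n ≤ i ∨ n ≤ j → q i j = 0) :
    ∃ s : Polynomial k ⊗[k] Polynomial k →ₗ[k] Polynomial k ⊗[k] Polynomial k,
      (IsTwistingMap k (Polynomial k) (Polynomial k) s ∧
        s ((X : Polynomial k) ⊗ₜ (X : Polynomial k)) =
          ∑ i ∈ Finset.range n, ∑ j ∈ Finset.range n,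
            q i j • (((X : Polynomial k) ^ i) ⊗ₜ ((X : Polynomial k) ^ j))) ∧
      (∀ s' : Polynomial k ⊗[k] Polynomial k →ₗ[k] Polynomial k ⊗[k] Polynomial k,
        IsTwistingMap k (Polynomial k) (Polynomial k) s' →
        s' ((X : Polynomial k) ⊗ₜ (X : Polynomial k)) =
          ∑ i ∈ Finset.range n, ∑ j ∈ Finset.range n,
            q i j • (((X : Polynomial k) ^ i) ⊗ₜ ((X : Polynomial k) ^ j)) →
        s' = s) ∧
      (∀ r m : ℕ, 0 < r → 0 < m → 2 < r + m →
        s (((X : Polynomial k) ^ r) ⊗ₜ ((X : Polynomial k) ^ m)) = 0) :=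
  stmt13_general k n q hq
end

section
/- Let A be a k-algebra and s: k[t]/⟨t²⟩ ⊗ A → A ⊗ k[t]/⟨t²⟩ a twisting map, with ι_0, ι_1: A → A defined by s(t ⊗ a) = ι_0(a) ⊗ 1 + ι_1(a) ⊗ t. Then: (1) ι_1 is an algebra endomorphism; (2) ι_0(ab) = ι_0(a)·b + ι_1(a)·ι_0(b); (3) ι_0² = 0 and ι_0∘ι_1 = −ι_1∘ι_0. Conversely, any pair (ι_0, ι_1) satisfying (1)–(3) defines a twisting map by this formula. -/
/-! Since `k[ε]` is free on `1, ε`, every element of `A ⊗ k[ε]` is uniquely `x ⊗ 1 + y ⊗ ε`, and a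
linear map `s` with `s (1 ⊗ a) = a ⊗ 1` is determined by `s (ε ⊗ a) = ι₀ a ⊗ 1 + ι₁ a ⊗ ε`.
For this map, compatibility with the multiplication of `A` at `ε` says exactly that `ι₁` is
multiplicative and `ι₀` is an `ι₁`-twisted derivation; in compatibility with the multiplication
of `k[ε]` the two sides differ only by the term coming from `ε ⊗ ε`, whose vanishing is
`ι₀² = 0` and `ι₀ ι₁ + ι₁ ι₀ = 0`. -/

open TensorProduct

namespace DualNumber

theorem fst_smul_one_add_snd_smul_eps {R : Type*} [Semiring R] (x : R[ε]) :
    x.fst • 1 + x.snd • ε = x := by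
  ext <;> simp

theorem tmul_one_add_tmul_eps_inj {R M : Type*} [CommSemiring R] [AddCommMonoid M] [Module R M]
    {x y x' y' : M} : x ⊗ₜ[R] (1 : R[ε]) + y ⊗ₜ ε = x' ⊗ₜ 1 + y' ⊗ₜ ε ↔ x = x' ∧ y = y' := by
  refine ⟨fun h => ⟨?_, ?_⟩, by rintro ⟨rfl, rfl⟩; rfl⟩
  · simpa using congrArg
      ((TensorProduct.rid R M).toLinearMap ∘ₗ (TrivSqZeroExt.fstHom R R R).toLinearMap.lTensor M) h
  · simpa using
      congrArg ((TensorProduct.rid R M).toLinearMap ∘ₗ (TrivSqZeroExt.sndHom R R).lTensor M) h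

variable {k A : Type*} [CommRing k] [Ring A] [Algebra k A]

noncomputable def twistingMap (ι₀ ι₁ : A →ₗ[k] A) : k[ε] ⊗[k] A →ₗ[k] A ⊗[k] k[ε] :=
  TensorProduct.lift <|
    (TrivSqZeroExt.fstHom k k k).toLinearMap.smulRight ((TensorProduct.mk k A k[ε]).flip 1) +
    (TrivSqZeroExt.sndHom k k).smulRight
      ((TensorProduct.mk k A k[ε]).flip 1 ∘ₗ ι₀ + (TensorProduct.mk k A k[ε]).flip ε ∘ₗ ι₁)

variable (ι₀ ι₁ : A →ₗ[k] A)

@[simp] theorem twistingMap_tmul (x : k[ε]) (a : A) :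
    twistingMap ι₀ ι₁ (x ⊗ₜ a) = x.fst • (a ⊗ₜ 1) + x.snd • (ι₀ a ⊗ₜ 1 + ι₁ a ⊗ₜ ε) := by
  simp [twistingMap]

theorem twistingMap_eps_tmul (a : A) : twistingMap ι₀ ι₁ (ε ⊗ₜ a) = ι₀ a ⊗ₜ 1 + ι₁ a ⊗ₜ ε := by
  simp

theorem twistingMap_mul_compat_A (b : k[ε]) (a a' : A) :
    (LinearMap.rTensor k[ε] (LinearMap.mul' k A))
        ((TensorProduct.assoc k A A k[ε]).symm
          ((LinearMap.lTensor A (twistingMap ι₀ ι₁))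
            ((TensorProduct.assoc k A k[ε] A)
              ((LinearMap.rTensor A (twistingMap ι₀ ι₁))
                ((TensorProduct.assoc k k[ε] A A).symm (b ⊗ₜ (a ⊗ₜ a'))))))) =
      b.fst • ((a * a') ⊗ₜ 1) +
        b.snd • ((ι₀ a * a' + ι₁ a * ι₀ a') ⊗ₜ 1 + (ι₁ a * ι₁ a') ⊗ₜ ε) := by
  simp [tmul_add, add_tmul, ← smul_tmul']
  module

theorem twistingMap_mul_compat_B (b b' : k[ε]) (a : A) :
    (LinearMap.lTensor A (LinearMap.mul' k k[ε]))
        ((TensorProduct.assoc k A k[ε] k[ε])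
          ((LinearMap.rTensor k[ε] (twistingMap ι₀ ι₁))
            ((TensorProduct.assoc k k[ε] A k[ε]).symm
              ((LinearMap.lTensor k[ε] (twistingMap ι₀ ι₁))
                ((TensorProduct.assoc k k[ε] k[ε] A) ((b ⊗ₜ b') ⊗ₜ a)))))) =
      twistingMap ι₀ ι₁ ((b * b') ⊗ₜ a) +
        (b.snd * b'.snd) • (ι₀ (ι₀ a) ⊗ₜ 1 + (ι₁ (ι₀ a) + ι₀ (ι₁ a)) ⊗ₜ ε) := by
  simp [tmul_add, add_tmul, ← smul_tmul']
  module

theorem eq_twistingMap {s : k[ε] ⊗[k] A →ₗ[k] A ⊗[k] k[ε]}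
    (h1 : ∀ a, s (1 ⊗ₜ a) = a ⊗ₜ 1) (hε : ∀ a, s (ε ⊗ₜ a) = ι₀ a ⊗ₜ 1 + ι₁ a ⊗ₜ ε) :
    s = twistingMap ι₀ ι₁ := by
  refine TensorProduct.ext' fun x a => ?_
  rw [← fst_smul_one_add_snd_smul_eps x, add_tmul, ← smul_tmul', ← smul_tmul', map_add,
    map_smul, map_smul, h1, hε]
  simp

theorem isTwistingMap_twistingMap_iff :
    IsTwistingMap k A k[ε] (twistingMap ι₀ ι₁) ↔
      ι₁ 1 = 1 ∧ (∀ a b, ι₁ (a * b) = ι₁ a * ι₁ b) ∧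
        (∀ a b, ι₀ (a * b) = ι₀ a * b + ι₁ a * ι₀ b) ∧
        (∀ a, ι₀ (ι₀ a) = 0) ∧ (∀ a, ι₀ (ι₁ a) = -ι₁ (ι₀ a)) := by
  constructor
  · intro ht
    have hunit := ht.unit_right ε
    have hA a a' := ht.mul_compat_A ε a a'
    have hB a := ht.mul_compat_B ε ε a
    simp only [twistingMap_eps_tmul, twistingMap_mul_compat_A, fst_eps, snd_eps, zero_smul,
      one_smul, zero_add] at hA
    simp only [twistingMap_mul_compat_B, snd_eps, one_mul, one_smul, left_eq_add] at hB
    replace hB a := (tmul_one_add_tmul_eps_inj (x' := (0 : A)) (y' := 0)).1 (by simpa using hB a)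
    exact ⟨(tmul_one_add_tmul_eps_inj (x' := 0) (y' := 1)).1 (by simpa using hunit) |>.2,
      fun a b => (tmul_one_add_tmul_eps_inj.1 (hA a b)).2,
      fun a b => (tmul_one_add_tmul_eps_inj.1 (hA a b)).1,
      fun a => (hB a).1, fun a => eq_neg_of_add_eq_zero_right (hB a).2⟩
  · rintro ⟨h1, hm1, hm0, hsq, hac⟩
    have h0 : ι₀ 1 = 0 := by simpa [h1] using hm0 1 1
    refine ⟨fun a => by simp, fun b => ?_, fun b b' a => ?_, fun b a a' => ?_⟩
    · conv_rhs => rw [← fst_smul_one_add_snd_smul_eps b]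
      simp [h0, h1, tmul_add, tmul_smul]
    · rw [twistingMap_mul_compat_B]
      simp [hsq, hac]
    · rw [twistingMap_mul_compat_A]
      simp [hm0, hm1]

end DualNumber

open DualNumber in
theorem stmt14 (k A : Type*) [CommRing k] [Ring A] [Algebra k A] :
    (∀ (s : DualNumber k ⊗[k] A →ₗ[k] A ⊗[k] DualNumber k) (ι₀ ι₁ : A →ₗ[k] A),
      IsTwistingMap k A (DualNumber k) s →
      (∀ a : A, s ((ε : DualNumber k) ⊗ₜ a) =
        ι₀ a ⊗ₜ (1 : DualNumber k) + ι₁ a ⊗ₜ (ε : DualNumber k)) →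
      (ι₁ 1 = 1 ∧ (∀ a b : A, ι₁ (a * b) = ι₁ a * ι₁ b) ∧
        (∀ a b : A, ι₀ (a * b) = ι₀ a * b + ι₁ a * ι₀ b) ∧
        (∀ a : A, ι₀ (ι₀ a) = 0) ∧
        (∀ a : A, ι₀ (ι₁ a) = - ι₁ (ι₀ a)))) ∧
    (∀ ι₀ ι₁ : A →ₗ[k] A,
      ι₁ 1 = 1 → (∀ a b : A, ι₁ (a * b) = ι₁ a * ι₁ b) →
      (∀ a b : A, ι₀ (a * b) = ι₀ a * b + ι₁ a * ι₀ b) →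
      (∀ a : A, ι₀ (ι₀ a) = 0) →
      (∀ a : A, ι₀ (ι₁ a) = - ι₁ (ι₀ a)) →
      ∃ s : DualNumber k ⊗[k] A →ₗ[k] A ⊗[k] DualNumber k,
        IsTwistingMap k A (DualNumber k) s ∧
        ∀ a : A, s ((ε : DualNumber k) ⊗ₜ a) =
          ι₀ a ⊗ₜ (1 : DualNumber k) + ι₁ a ⊗ₜ (ε : DualNumber k)) := by
  refine ⟨fun s ι₀ ι₁ ht hs => ?_, fun ι₀ ι₁ h1 hm1 hm0 hsq hac =>
    ⟨twistingMap ι₀ ι₁, (isTwistingMap_twistingMap_iff ι₀ ι₁).2 ⟨h1, hm1, hm0, hsq, hac⟩,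
      twistingMap_eps_tmul ι₀ ι₁⟩⟩
  obtain rfl := eq_twistingMap ι₀ ι₁ ht.unit_left hs
  exact (isTwistingMap_twistingMap_iff ι₀ ι₁).1 ht
end

section
/- Let k be a commutative ring, Q ∈ k[Y²] (i.e., Q = Σ q_i Y^i with q_i = 0 for i odd) and P = −Y. Then there is a unique twisting map s: k[t]/⟨t²⟩ ⊗ k[Y] → k[Y] ⊗ k[t]/⟨t²⟩ with s(t ⊗ Y) = Q ⊗ 1 + P ⊗ t. Equivalently, the pair of maps ι_1 (the algebra endomorphism with ι_1(Y) = −Y) and ι_0 (the ι_1-derivation with ι_0(Y) = Q) satisfies ι_0² = 0 and ι_0∘ι_1 = −ι_1∘ι_0. -/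
/-!
For `b = b₀ + b₁ ε`, the map `s (b ⊗ a) = b₀ a ⊗ 1 + b₁ (ι₀ a ⊗ 1 + ι₁ a ⊗ ε)` is a twisting map as
soon as `ι₀` is an `ι₁`-derivation with `ι₀² = 0` and `ι₀ ι₁ = -ι₁ ι₀`: compatibility with the
product of `A` is the twisted Leibniz rule, and compatibility with `ε² = 0` is the other two
identities. For `ι₁ : X ↦ -X` and `ι₀` the `ι₁`-derivation with `X ↦ Q`, both `ι₀ ι₁ + ι₁ ι₀` and
`ι₀²` are again twisted derivations, so they vanish once they vanish at `X`, where they take the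
values `-Q + Q(-X)` and `ι₀ Q`; both are zero because `Q` is even.
Conversely, compatibility with the product of `k[X]` and with the unit determines a twisting map
by its value at `ε ⊗ X`.
-/

open TensorProduct

open DualNumber Polynomial

lemma DualNumber.fst_smul_one_add_snd_smul_eps_s19 {k : Type*} [CommRing k] (b : DualNumber k) :
    b.fst • (1 : DualNumber k) + b.snd • ε = b := by
  ext <;> simp

section TwistedDerivation

variable {k A : Type*} [CommRing k] [Ring A] [Algebra k A]

structure IsTwistedDerivation (σ τ : A →ₐ[k] A) (D : A →ₗ[k] A) : Prop where
  leibniz : ∀ a b, D (a * b) = D a * τ b + σ a * D b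

variable {σ τ : A →ₐ[k] A} {D : A →ₗ[k] A}

lemma IsTwistedDerivation.map_one_eq_zero (hD : IsTwistedDerivation σ τ D) : D 1 = 0 := by
  simpa using hD.leibniz 1 1

lemma IsTwistedDerivation.comp_add_comp (hD : IsTwistedDerivation σ (AlgHom.id k A) D) :
    IsTwistedDerivation (σ.comp σ) σ (D ∘ₗ σ.toLinearMap + σ.toLinearMap ∘ₗ D) := by
  refine ⟨fun a b => ?_⟩
  simp only [LinearMap.add_apply, LinearMap.comp_apply, AlgHom.toLinearMap_apply, AlgHom.comp_apply,
    map_mul, hD.leibniz, map_add, AlgHom.id_apply]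
  noncomm_ring

lemma IsTwistedDerivation.comp_self (hD : IsTwistedDerivation σ (AlgHom.id k A) D)
    (hanti : ∀ a, D (σ a) = -σ (D a)) :
    IsTwistedDerivation (σ.comp σ) (AlgHom.id k A) (D ∘ₗ D) := by
  refine ⟨fun a b => ?_⟩
  simp only [LinearMap.comp_apply, AlgHom.comp_apply, hD.leibniz, map_add, hanti, AlgHom.id_apply]
  noncomm_ring

end TwistedDerivation

section TwistingMap

variable {k A : Type*} [CommRing k] [Ring A] [Algebra k A]

noncomputable def dualTwist (ι₁ : A →ₐ[k] A) (ι₀ : A →ₗ[k] A) :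
    DualNumber k ⊗[k] A →ₗ[k] A ⊗[k] DualNumber k :=
  TensorProduct.lift <| LinearMap.mk₂ k
    (fun b a => b.fst • (a ⊗ₜ 1) + b.snd • (ι₀ a ⊗ₜ 1 + ι₁ a ⊗ₜ ε))
    (fun _ _ _ => by simp only [TrivSqZeroExt.fst_add, TrivSqZeroExt.snd_add]; module)
    (fun _ _ _ => by simp only [TrivSqZeroExt.fst_smul, TrivSqZeroExt.snd_smul]; module)
    (fun _ _ _ => by simp only [map_add, add_tmul]; module)
    (fun _ _ _ => by simp only [map_smul, ← smul_tmul']; module)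

variable (ι₁ : A →ₐ[k] A) (ι₀ : A →ₗ[k] A)

@[simp]
lemma dualTwist_tmul (b : DualNumber k) (a : A) :
    dualTwist ι₁ ι₀ (b ⊗ₜ a) = b.fst • (a ⊗ₜ 1) + b.snd • (ι₀ a ⊗ₜ 1 + ι₁ a ⊗ₜ ε) := rfl

lemma isTwistingMap_dualTwist (hι₀ : IsTwistedDerivation ι₁ (AlgHom.id k A) ι₀)
    (hsq : ∀ a, ι₀ (ι₀ a) = 0) (hanti : ∀ a, ι₀ (ι₁ a) = -ι₁ (ι₀ a)) :
    IsTwistingMap k A (DualNumber k) (dualTwist ι₁ ι₀) where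
  unit_left a := by simp
  unit_right b := by
    conv_rhs => rw [← b.fst_smul_one_add_snd_smul_eps_s19]
    simp [hι₀.map_one_eq_zero, tmul_add]
  mul_compat_B b b' a := by
    simp only [dualTwist_tmul, TrivSqZeroExt.fst_mul, TrivSqZeroExt.snd_mul, smul_eq_mul,
      MulOpposite.smul_eq_mul_unop, MulOpposite.unop_op, smul_add, smul_tmul', assoc_tmul,
      assoc_symm_tmul, tmul_add, add_tmul, tmul_smul, map_add, LinearMap.lTensor_tmul,
      LinearMap.rTensor_tmul, LinearMap.mul'_apply, TrivSqZeroExt.fst_smul,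
      TrivSqZeroExt.snd_smul, hsq, hanti, smul_neg, mul_one, one_mul, eps_mul_eps, zero_tmul,
      tmul_zero, zero_add, add_zero]
    simp only [neg_tmul, ← smul_tmul']
    module
  mul_compat_A b a a' := by
    simp only [dualTwist_tmul, hι₀.leibniz, AlgHom.coe_id, id_eq, map_mul, smul_add, smul_tmul',
      assoc_tmul, assoc_symm_tmul, tmul_add, add_tmul, map_add, LinearMap.lTensor_tmul,
      LinearMap.rTensor_tmul, LinearMap.mul'_apply, TrivSqZeroExt.fst_one, TrivSqZeroExt.snd_one,
      fst_eps, snd_eps, one_smul, zero_smul, zero_add, add_zero, Algebra.smul_mul_assoc]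
    abel

end TwistingMap

lemma IsTwistingMap.ext_polynomial {k B : Type*} [CommRing k] [Ring B] [Algebra k B]
    {s s' : B ⊗[k] k[X] →ₗ[k] k[X] ⊗[k] B} (hs : IsTwistingMap k k[X] B s)
    (hs' : IsTwistingMap k k[X] B s') (hX : ∀ b, s (b ⊗ₜ X) = s' (b ⊗ₜ X)) : s = s' := by
  have hpow : ∀ n (b : B), s (b ⊗ₜ (X ^ n)) = s' (b ⊗ₜ (X ^ n)) := by
    intro n
    induction n with
    | zero => simp [hs.unit_right, hs'.unit_right]
    | succ n ih =>
      have hl : ∀ t : k[X] ⊗[k] B,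
          s.lTensor k[X] (TensorProduct.assoc k k[X] B k[X] (t ⊗ₜ (X ^ n))) =
            s'.lTensor k[X] (TensorProduct.assoc k k[X] B k[X] (t ⊗ₜ (X ^ n))) := by
        intro t
        induction t using TensorProduct.induction_on with
        | zero => simp
        | tmul p b => simp [ih]
        | add t t' ht ht' => simp only [add_tmul, map_add, ht, ht']
      intro b
      rw [pow_succ', hs.mul_compat_A, hs'.mul_compat_A]
      simp only [assoc_symm_tmul, LinearMap.rTensor_tmul, hX, hl]
  refine TensorProduct.ext' fun b p => ?_
  induction p using Polynomial.induction_on' with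
  | add p q hp hq => simp only [tmul_add, map_add, hp, hq]
  | monomial n c =>
    rw [← C_mul_X_pow_eq_monomial, ← smul_eq_C_mul, tmul_smul, map_smul, map_smul, hpow]

lemma IsTwistingMap.ext_dualNumber_polynomial {k : Type*} [CommRing k]
    {s s' : DualNumber k ⊗[k] k[X] →ₗ[k] k[X] ⊗[k] DualNumber k}
    (hs : IsTwistingMap k k[X] (DualNumber k) s) (hs' : IsTwistingMap k k[X] (DualNumber k) s')
    (hε : s (ε ⊗ₜ X) = s' (ε ⊗ₜ X)) : s = s' := by
  refine hs.ext_polynomial hs' fun b => ?_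
  rw [← b.fst_smul_one_add_snd_smul_eps_s19]
  simp only [add_tmul, ← smul_tmul', map_add, map_smul, hs.unit_left, hs'.unit_left, hε]

namespace Polynomial

variable {k : Type*} [CommRing k]

lemma linearMap_ext_X_pow {M : Type*} [AddCommMonoid M] [Module k M] {f g : k[X] →ₗ[k] M}
    (h : ∀ n, f (X ^ n) = g (X ^ n)) : f = g :=
  (basisMonomials k).ext fun n => by simpa [X_pow_eq_monomial] using h n

lemma map_eq_zero_of_coeff_odd_eq_zero {M : Type*} [AddCommMonoid M] [Module k M]
    (f : k[X] →ₗ[k] M) (hf : ∀ n, Even n → f (X ^ n) = 0) {p : k[X]}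
    (hp : ∀ i, Odd i → p.coeff i = 0) : f p = 0 := by
  rw [p.as_sum_support, map_sum]
  refine Finset.sum_eq_zero fun i _ => ?_
  rcases Nat.even_or_odd i with hi | hi
  · rw [← C_mul_X_pow_eq_monomial, ← smul_eq_C_mul, map_smul, hf i hi, smul_zero]
  · rw [hp i hi, monomial_zero_right, map_zero]

lemma aeval_neg_X_of_coeff_odd_eq_zero {p : k[X]} (hp : ∀ i, Odd i → p.coeff i = 0) :
    aeval (-X) p = p :=
  sub_eq_zero.mp <| map_eq_zero_of_coeff_odd_eq_zero ((aeval (-X)).toLinearMap - LinearMap.id)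
    (fun n hn => by simp [hn.neg_pow]) hp

variable {σ τ : k[X] →ₐ[k] k[X]} {D : k[X] →ₗ[k] k[X]}

lemma _root_.IsTwistedDerivation.eq_zero_of_map_X (hD : IsTwistedDerivation σ τ D) (hX : D X = 0) :
    D = 0 := by
  refine linearMap_ext_X_pow fun n => ?_
  induction n with
  | zero => simpa using hD.map_one_eq_zero
  | succ n ih => simp [pow_succ, hD.leibniz, ih, hX]

lemma isTwistedDerivation_of_map_X_mul (h1 : D 1 = 0)
    (hX : ∀ b, D (X * b) = D X * b + σ X * D b) : IsTwistedDerivation σ (AlgHom.id k k[X]) D := by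
  refine ⟨fun a b => ?_⟩
  induction a using Polynomial.induction_on with
  | C c =>
    have hC : D (C c) = 0 := by rw [← mul_one (C c), ← smul_eq_C_mul, map_smul, h1, smul_zero]
    have hσ : σ (C c) = C c := σ.commutes c
    simp [hC, hσ, ← smul_eq_C_mul]
  | add p q hp hq => simp only [add_mul, map_add, hp, hq]; ring
  | monomial n c ih =>
    rw [show C c * X ^ (n + 1) = X * (C c * X ^ n) by ring, mul_assoc, hX, hX, ih, map_mul σ X,
      AlgHom.id_apply]
    ring

variable (Q : k[X])

/-- The twisted Leibniz rule forces `X ^ n ↦ ∑_{j < n} (-X) ^ j * Q * X ^ (n - 1 - j)`, which is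
`Q * X ^ (n - 1)` for odd `n` and `0` for even `n`. -/
noncomputable def negXDerivation : k[X] →ₗ[k] k[X] :=
  (basisMonomials k).constr k fun n => if Odd n then Q * X ^ (n - 1) else 0

lemma negXDerivation_X_pow (n : ℕ) :
    negXDerivation Q (X ^ n) = if Odd n then Q * X ^ (n - 1) else 0 := by
  have h := (basisMonomials k).constr_basis k (fun n => if Odd n then Q * X ^ (n - 1) else 0) n
  rw [coe_basisMonomials] at h
  rw [X_pow_eq_monomial]
  exact h

lemma negXDerivation_X : negXDerivation Q X = Q := by
  simpa using negXDerivation_X_pow Q 1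

lemma negXDerivation_X_mul (b : k[X]) :
    negXDerivation Q (X * b) = Q * b - X * negXDerivation Q b := by
  have h : negXDerivation Q ∘ₗ LinearMap.mulLeft k X =
      LinearMap.mulLeft k Q - LinearMap.mulLeft k X ∘ₗ negXDerivation Q := by
    refine linearMap_ext_X_pow fun n => ?_
    simp only [LinearMap.comp_apply, LinearMap.sub_apply, LinearMap.mulLeft_apply, ← pow_succ',
      negXDerivation_X_pow]
    rcases Nat.even_or_odd n with hn | ⟨r, rfl⟩
    · simp [Nat.odd_add_one, Nat.not_odd_iff_even.mpr hn]
    · simp [Nat.odd_add_one, pow_succ']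
      ring
  exact LinearMap.congr_fun h b

lemma isTwistedDerivation_negXDerivation :
    IsTwistedDerivation (aeval (-X)) (AlgHom.id k k[X]) (negXDerivation Q) :=
  isTwistedDerivation_of_map_X_mul (by simpa using negXDerivation_X_pow Q 0)
    fun b => by rw [negXDerivation_X_mul, negXDerivation_X, aeval_X]; ring

variable {Q}

lemma negXDerivation_of_coeff_odd_eq_zero {p : k[X]} (hp : ∀ i, Odd i → p.coeff i = 0) :
    negXDerivation Q p = 0 :=
  map_eq_zero_of_coeff_odd_eq_zero _ (fun n hn => by
    simp [negXDerivation_X_pow, Nat.not_odd_iff_even.mpr hn]) hp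

lemma negXDerivation_aeval_neg_X (hQ : ∀ i, Odd i → Q.coeff i = 0) (p : k[X]) :
    negXDerivation Q (aeval (-X) p) = -aeval (-X) (negXDerivation Q p) := by
  have h := (isTwistedDerivation_negXDerivation Q).comp_add_comp.eq_zero_of_map_X (by
    simp [negXDerivation_X, aeval_neg_X_of_coeff_odd_eq_zero hQ])
  exact eq_neg_of_add_eq_zero_left (LinearMap.congr_fun h p)

lemma negXDerivation_negXDerivation (hQ : ∀ i, Odd i → Q.coeff i = 0) (p : k[X]) :
    negXDerivation Q (negXDerivation Q p) = 0 := by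
  have h := ((isTwistedDerivation_negXDerivation Q).comp_self
    (negXDerivation_aeval_neg_X hQ)).eq_zero_of_map_X (by
      simp [negXDerivation_X, negXDerivation_of_coeff_odd_eq_zero hQ])
  exact LinearMap.congr_fun h p

end Polynomial

open DualNumber Polynomial in
theorem stmt19 (k : Type*) [CommRing k] (Q : Polynomial k)
    (hQ : ∀ i : ℕ, Odd i → Q.coeff i = 0) :
    ∃! s : DualNumber k ⊗[k] Polynomial k →ₗ[k] Polynomial k ⊗[k] DualNumber k,
      IsTwistingMap k (Polynomial k) (DualNumber k) s ∧
      s ((ε : DualNumber k) ⊗ₜ (X : Polynomial k)) =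
        Q ⊗ₜ (1 : DualNumber k) + (-X : Polynomial k) ⊗ₜ (ε : DualNumber k) := by
  have hs := isTwistingMap_dualTwist (aeval (-X)) (negXDerivation Q)
    (isTwistedDerivation_negXDerivation Q) (negXDerivation_negXDerivation hQ)
    (negXDerivation_aeval_neg_X hQ)
  have hε : dualTwist (aeval (-X)) (negXDerivation Q) (ε ⊗ₜ X) = Q ⊗ₜ 1 + (-X) ⊗ₜ ε := by
    simp [negXDerivation_X]
  exact ⟨_, ⟨hs, hε⟩, fun s' ⟨hs', hs'ε⟩ => hs'.ext_dualNumber_polynomial hs (hs'ε.trans hε.symm)⟩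
end
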